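/- Let Γ be a group with finite generating set S acting by isometries on a metric space X, let x₀ ∈ X with L = max_{σ∈S} ρ(x₀, σx₀), let η ∈ (0, L) and D ≥ 0 such that ρ(x₀, γx₀) ≤ (L − η)·l_S(γ) + D for all γ ∈ Γ. Then for every real c > Ent_S(Γ) + L − η, the Poincaré series P_c(x, y) = Σ_{γ∈Γ} e^{−c·l_S(γ)} · cosh(ρ(x, γy)) converges for all x, y ∈ X. -/

import Mathlib

open Pointwise

/-- The word length of `γ` with respect to a generating set `S`: the least `n` such that
`γ` is a product of `n` elements of `S ∪ S⁻¹` (so the identity has word length `0`). -/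
noncomputable def wordLength {Γ : Type*} [Group Γ] (S : Set Γ) (γ : Γ) : ℕ :=
  sInf {n : ℕ | γ ∈ (S ∪ S⁻¹) ^ n}

/-- The entropy (exponential growth rate) of `Γ` with respect to the generating set `S`:
`Ent_S Γ = lim_{m → ∞} (1/m) log |{γ : l_S(γ) ≤ m}|`. -/
noncomputable def entropy {Γ : Type*} [Group Γ] (S : Set Γ) : ℝ :=
  Filter.atTop.limsup fun m : ℕ =>
    Real.log (Nat.card {γ : Γ // wordLength S γ ≤ m}) / m

/-! By the triangle inequality through `x₀` and the hypothesis on `ρ(x₀, γ x₀)`,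
`cosh ρ(x, γ y) ≤ C e^{(L - η) l_S(γ)}`, so the Poincaré series is dominated by the growth
series `∑ e^{-t l_S(γ)}` with `t = c - (L - η) > Ent_S(Γ)`. Grouping the growth series by word
length, the sphere of radius `m` has at most `e^{s m}` elements for any `s ∈ (Ent_S(Γ), t)` and
all large `m`, so it is dominated by a geometric series of ratio `e^{s - t} < 1`. The crude bound
`(2|S| + 1)^m` on the size of balls is what makes the `limsup` defining `Ent_S(Γ)` usable at all:
the `limsup` of a sequence not bounded above is a junk value. -/

open Filter Real Finset

lemma exists_mem_pow_of_mem_closure {M : Type*} [Monoid M] {s : Set M} {x : M}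
    (hx : x ∈ Submonoid.closure s) : ∃ n : ℕ, x ∈ s ^ n := by
  induction hx using Submonoid.closure_induction with
  | mem x hx => exact ⟨1, by rwa [pow_one]⟩
  | one => exact ⟨0, by rw [pow_zero]; rfl⟩
  | mul x y _ _ hx hy =>
    obtain ⟨m, hm⟩ := hx
    obtain ⟨n, hn⟩ := hy
    exact ⟨m + n, by rw [pow_add]; exact Set.mul_mem_mul hm hn⟩

lemma summable_exp_neg_mul_of_eventually_natCard_le {α : Type*} (l : α → ℕ)
    (hfin : ∀ m, {a | l a ≤ m}.Finite) {s t : ℝ} (hst : s < t)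
    (hN : ∀ᶠ m : ℕ in atTop, (Nat.card {a // l a ≤ m} : ℝ) ≤ exp (s * m)) :
    Summable fun a => exp (-t * l a) := by
  have hsphere : ∀ m, Finite {a // l a = m} := fun m =>
    ((hfin m).subset fun a (ha : l a = m) => ha.le).to_subtype
  have hfiber : ∀ m, ∑' a : {a // l a = m}, exp (-t * l a) =
      Nat.card {a // l a = m} * exp (-t * m) := by
    intro m
    have := Fintype.ofFinite {a // l a = m}
    rw [tsum_fintype, Finset.sum_congr rfl fun a _ => by rw [a.prop], Finset.sum_const,
      Finset.card_univ, ← Nat.card_eq_fintype_card, nsmul_eq_mul]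
  rw [← (Equiv.sigmaFiberEquiv l).summable_iff]
  refine (summable_sigma_of_nonneg fun _ => (exp_pos _).le).mpr ⟨fun m => .of_finite, ?_⟩
  refine (summable_exp_nat_mul_iff.mpr (sub_neg.mpr hst)).of_norm_bounded_eventually_nat ?_
  filter_upwards [hN] with m hm
  have hsphere_le : Nat.card {a // l a = m} ≤ Nat.card {a // l a ≤ m} :=
    have : Finite {a // l a ≤ m} := (hfin m).to_subtype
    Nat.card_le_card_of_injective (fun a => ⟨a, a.prop.le⟩) fun _ _ h =>
      Subtype.ext (by simpa using h)
  simp only [Equiv.sigmaFiberEquiv_apply, hfiber]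
  rw [Real.norm_of_nonneg (by positivity)]
  calc (Nat.card {a // l a = m} : ℝ) * exp (-t * m) ≤ exp (s * m) * exp (-t * m) := by
        gcongr
        exact (Nat.cast_le.mpr hsphere_le).trans hm
    _ = exp (m * (s - t)) := by rw [← exp_add]; ring_nf

section WordLength

variable {Γ : Type*} [Group Γ]

lemma wordLength_one (S : Set Γ) : wordLength S 1 = 0 :=
  Nat.le_zero.mp (Nat.sInf_le (show (1 : Γ) ∈ (S ∪ S⁻¹) ^ 0 by rw [pow_zero]; rfl))

lemma mem_pow_wordLength {S : Set Γ} (hS : Subgroup.closure S = ⊤) (γ : Γ) :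
    γ ∈ (S ∪ S⁻¹) ^ wordLength S γ := by
  have hγ : γ ∈ Submonoid.closure (S ∪ S⁻¹) := by
    rw [← Subgroup.closure_toSubmonoid, hS]; trivial
  exact Nat.sInf_mem (exists_mem_pow_of_mem_closure hγ)

lemma setOf_wordLength_le_subset [DecidableEq Γ] {S : Finset Γ}
    (hS : Subgroup.closure (S : Set Γ) = ⊤) (m : ℕ) :
    {γ | wordLength (S : Set Γ) γ ≤ m} ⊆ ↑((S ∪ S⁻¹ ∪ {1}) ^ m) := fun γ hγ => by
  push_cast
  exact Set.pow_subset_pow Set.subset_union_left (Set.mem_union_right _ (Set.mem_singleton 1))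
    hγ (mem_pow_wordLength hS γ)

lemma finite_setOf_wordLength_le {S : Finset Γ} (hS : Subgroup.closure (S : Set Γ) = ⊤)
    (m : ℕ) : {γ | wordLength (S : Set Γ) γ ≤ m}.Finite := by
  classical
  exact (Finset.finite_toSet _).subset (setOf_wordLength_le_subset hS m)

lemma natCard_wordLength_le_pos {S : Finset Γ} (hS : Subgroup.closure (S : Set Γ) = ⊤)
    (m : ℕ) : 0 < Nat.card {γ // wordLength (S : Set Γ) γ ≤ m} :=
  have : Finite {γ // wordLength (S : Set Γ) γ ≤ m} :=
    (finite_setOf_wordLength_le hS m).to_subtype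
  have : Nonempty {γ // wordLength (S : Set Γ) γ ≤ m} := ⟨⟨1, by simp [wordLength_one]⟩⟩
  Nat.card_pos

lemma natCard_wordLength_le_le {S : Finset Γ} (hS : Subgroup.closure (S : Set Γ) = ⊤)
    (m : ℕ) : Nat.card {γ // wordLength (S : Set Γ) γ ≤ m} ≤ (2 * #S + 1) ^ m := by
  classical
  calc Nat.card {γ // wordLength (S : Set Γ) γ ≤ m}
      ≤ Nat.card ((S ∪ S⁻¹ ∪ {1}) ^ m : Finset Γ) :=
        Nat.card_mono (Finset.finite_toSet _) (setOf_wordLength_le_subset hS m)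
    _ = #((S ∪ S⁻¹ ∪ {1}) ^ m) := by
        simp only [Nat.card_eq_fintype_card, Fintype.card_coe]
    _ ≤ #(S ∪ S⁻¹ ∪ {1}) ^ m := Finset.card_pow_le
    _ ≤ (2 * #S + 1) ^ m := by
        gcongr
        calc #(S ∪ S⁻¹ ∪ {1}) ≤ #(S ∪ S⁻¹) + 1 := Finset.card_union_le _ _
          _ ≤ #S + #S⁻¹ + 1 := by gcongr; exact Finset.card_union_le _ _
          _ = 2 * #S + 1 := by rw [Finset.card_inv]; ring

lemma eventually_natCard_wordLength_le_le_exp {S : Finset Γ}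
    (hS : Subgroup.closure (S : Set Γ) = ⊤) {s : ℝ} (hs : entropy (S : Set Γ) < s) :
    ∀ᶠ m : ℕ in atTop, (Nat.card {γ // wordLength (S : Set Γ) γ ≤ m} : ℝ) ≤ exp (s * m) := by
  have hbdd : IsBoundedUnder (· ≤ ·) atTop fun m : ℕ =>
      log (Nat.card {γ // wordLength (S : Set Γ) γ ≤ m}) / m := by
    refine isBoundedUnder_of_eventually_le (a := log (2 * #S + 1)) ?_
    filter_upwards [eventually_gt_atTop 0] with m hm
    rw [div_le_iff₀ (by exact_mod_cast hm), mul_comm, ← log_pow]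
    apply log_le_log (by exact_mod_cast natCard_wordLength_le_pos hS m)
    exact_mod_cast natCard_wordLength_le_le hS m
  filter_upwards [eventually_lt_of_limsup_lt hs hbdd, eventually_gt_atTop 0] with m hm hm0
  rw [div_lt_iff₀ (by exact_mod_cast hm0)] at hm
  exact (le_exp_log _).trans (exp_le_exp.mpr hm.le)

lemma summable_exp_neg_mul_wordLength {S : Finset Γ} (hS : Subgroup.closure (S : Set Γ) = ⊤)
    {t : ℝ} (ht : entropy (S : Set Γ) < t) :
    Summable fun γ : Γ => exp (-t * wordLength (S : Set Γ) γ) := by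
  obtain ⟨s, hs, hst⟩ := exists_between ht
  exact summable_exp_neg_mul_of_eventually_natCard_le _ (finite_setOf_wordLength_le hS) hst
    (eventually_natCard_wordLength_le_le_exp hS hs)

end WordLength

lemma Real.cosh_le_exp_of_nonneg {x : ℝ} (hx : 0 ≤ x) : cosh x ≤ exp x := by
  rw [cosh_eq]
  linarith [exp_le_exp.mpr (show -x ≤ x by linarith)]

lemma dist_smul_le_of_isometry {Γ X : Type*} [PseudoMetricSpace X] [SMul Γ X]
    (hiso : ∀ γ : Γ, Isometry fun x : X => γ • x) (x₀ x y : X) (γ : Γ) :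
    dist x (γ • y) ≤ dist x x₀ + dist x₀ (γ • x₀) + dist x₀ y := by
  calc dist x (γ • y) ≤ dist x x₀ + dist x₀ (γ • x₀) + dist (γ • x₀) (γ • y) :=
        dist_triangle4 _ _ _ _
    _ = _ := by rw [(hiso γ).dist_eq]

theorem stmt_16_general {Γ X : Type*} [Group Γ] [MetricSpace X] [MulAction Γ X]
    (hiso : ∀ γ : Γ, Isometry fun x : X => γ • x)
    (S : Finset Γ)
    (hgen : Subgroup.closure (S : Set Γ) = ⊤)
    (x₀ : X) (L η D : ℝ)
    (hb : ∀ γ : Γ, dist x₀ (γ • x₀) ≤ (L - η) * (wordLength (S : Set Γ) γ : ℝ) + D)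
    (c : ℝ) (hc : c > entropy (S : Set Γ) + L - η) (x y : X) :
    Summable fun γ : Γ =>
      Real.exp (-c * (wordLength (S : Set Γ) γ : ℝ)) * Real.cosh (dist x (γ • y)) := by
  have hgrowth := summable_exp_neg_mul_wordLength hgen (t := c - (L - η)) (by linarith)
  refine (hgrowth.mul_left (exp (dist x x₀ + dist x₀ y + D))).of_nonneg_of_le
    (fun γ => by positivity) fun γ => ?_
  have hdist : dist x (γ • y) ≤
      dist x x₀ + dist x₀ y + D + (L - η) * wordLength (S : Set Γ) γ := by
    linarith [dist_smul_le_of_isometry hiso x₀ x y γ, hb γ]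
  calc exp (-c * wordLength (S : Set Γ) γ) * cosh (dist x (γ • y))
      ≤ exp (-c * wordLength (S : Set Γ) γ) *
          exp (dist x x₀ + dist x₀ y + D + (L - η) * wordLength (S : Set Γ) γ) := by
        gcongr
        exact (cosh_le_exp_of_nonneg dist_nonneg).trans (exp_le_exp.mpr hdist)
    _ = exp (dist x x₀ + dist x₀ y + D) * exp (-(c - (L - η)) * wordLength (S : Set Γ) γ) := by
        rw [← exp_add, ← exp_add]
        ring_nf

theorem stmt_16 {Γ X : Type*} [Group Γ] [MetricSpace X] [MulAction Γ X]
    (hiso : ∀ γ : Γ, Isometry fun x : X => γ • x)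
    (S : Finset Γ) (hSne : S.Nonempty)
    (hgen : Subgroup.closure (S : Set Γ) = ⊤)
    (x₀ : X) (L η D : ℝ)
    (hL : L = S.sup' hSne fun σ => dist x₀ (σ • x₀))
    (hη₀ : 0 < η) (hηL : η < L) (hD : 0 ≤ D)
    (hb : ∀ γ : Γ, dist x₀ (γ • x₀) ≤ (L - η) * (wordLength (S : Set Γ) γ : ℝ) + D)
    (c : ℝ) (hc : c > entropy (S : Set Γ) + L - η) (x y : X) :
    Summable fun γ : Γ =>
      Real.exp (-c * (wordLength (S : Set Γ) γ : ℝ)) * Real.cosh (dist x (γ • y)) :=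
  stmt_16_general hiso S hgen x₀ L η D hb c hc x y
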